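/- Let u be a solution of the damped equation u'' + A u + u' = 0 with data (u0,u1) ∈ H × H. Then the auxiliary quantity ‖u(t)‖_{E♯}² = ⟨A u(t), u(t)⟩ + ‖u'(t) + (1/2) u(t)‖² + (1/4)‖u(t)‖² is differentiable in t and satisfies (d/dt) ‖u(t)‖_{E♯}² + E(u;t) = 0 for all t ≥ 0, where E(u;t) = ‖u'(t)‖² + ⟨A u(t), u(t)⟩. -/

import Mathlib

open scoped RealInnerProductSpace

/-!
With `v = u'`, the derivative is `2⟨A u, v⟩ + 2⟨v + u/2, u'' + v/2⟩ + ⟨u, v⟩/2`, the first term by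
selfadjointness of `A`. Substituting `u'' = -A u - v` from the equation, the cross terms `⟨A u, v⟩`
and `⟨u, v⟩` cancel, leaving `-‖v‖² - ⟨A u, u⟩`.
-/

section

variable {H : Type*} [NormedAddCommGroup H] [InnerProductSpace ℝ H]

/-- `‖(x, v)‖_{E♯}²` for a position `x` and velocity `v`. -/
noncomputable def sharpEnergy (A : H →L[ℝ] H) (x v : H) : ℝ :=
  ⟪A x, x⟫ + ‖v + (1 / 2 : ℝ) • x‖ ^ 2 + (1 / 4) * ‖x‖ ^ 2

theorem HasDerivAt.inner_apply_self {A : H →L[ℝ] H} (hA : (A : H →ₗ[ℝ] H).IsSymmetric)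
    {x : ℝ → H} {x' : H} {t : ℝ} (hx : HasDerivAt x x' t) :
    HasDerivAt (fun s => ⟪A (x s), x s⟫) (2 * ⟪A (x t), x'⟫) t := by
  refine ((A.hasFDerivAt.comp_hasDerivAt t hx).inner ℝ hx).congr_deriv ?_
  have hsymm : ⟪A x', x t⟫ = ⟪x', A (x t)⟫ := hA x' (x t)
  rw [Function.comp_apply, hsymm, real_inner_comm x']
  ring

theorem HasDerivAt.sharpEnergy {A : H →L[ℝ] H} (hA : (A : H →ₗ[ℝ] H).IsSymmetric) {x v : ℝ → H}
    {x' v' : H} {t : ℝ} (hx : HasDerivAt x x' t) (hv : HasDerivAt v v' t) :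
    HasDerivAt (fun s => sharpEnergy A (x s) (v s))
      (2 * ⟪A (x t), x'⟫ + 2 * ⟪v t + (1 / 2 : ℝ) • x t, v' + (1 / 2 : ℝ) • x'⟫
        + 1 / 4 * (2 * ⟪x t, x'⟫)) t :=
  ((hx.inner_apply_self hA).add (hv.add (hx.const_smul _)).norm_sq).add (hx.norm_sq.const_mul _)

theorem sharpEnergy_deriv_eq_of_damped (A : H →L[ℝ] H) {x v w : H} (h : w + A x + v = 0) :
    2 * ⟪A x, v⟫ + 2 * ⟪v + (1 / 2 : ℝ) • x, w + (1 / 2 : ℝ) • v⟫ + 1 / 4 * (2 * ⟪x, v⟫)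
      = -(‖v‖ ^ 2 + ⟪A x, x⟫) := by
  obtain rfl : w = -A x - v := by linear_combination (norm := module) h
  simp only [inner_add_left, inner_sub_right, inner_add_right, inner_neg_right, inner_smul_left,
    inner_smul_right, real_inner_self_eq_norm_sq, conj_trivial]
  rw [real_inner_comm (A x) v, real_inner_comm (A x) x]
  ring

end

theorem stmt_3 {H : Type*} [NormedAddCommGroup H] [InnerProductSpace ℝ H] [CompleteSpace H]
    (A : H →L[ℝ] H) (hA : IsSelfAdjoint A)
    (u : ℝ → H) (hu : ContDiff ℝ 2 u)
    (heq : ∀ t ≥ (0:ℝ), deriv (deriv u) t + A (u t) + deriv u t = 0) :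
    ∀ t ≥ (0:ℝ),
      HasDerivAt
        (fun s => ⟪A (u s), u s⟫ + ‖deriv u s + (1 / 2 : ℝ) • u s‖ ^ 2
          + (1 / 4) * ‖u s‖ ^ 2)
        (-(‖deriv u t‖ ^ 2 + ⟪A (u t), u t⟫)) t := by
  intro t ht
  have hu' : HasDerivAt u (deriv u t) t := (hu.differentiable (by norm_num) t).hasDerivAt
  have hu'' : HasDerivAt (deriv u) (deriv (deriv u) t) t :=
    ((hu.deriv' (n := 1)).differentiable one_ne_zero t).hasDerivAt
  rw [← sharpEnergy_deriv_eq_of_damped A (heq t ht)]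
  exact hu'.sharpEnergy hA.isSymmetric hu''
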